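/- Fix d ≥ 2. In the polynomial ring ℂ[m_0,…,m_d], let E be the 2×d matrix whose (1,c) entry is c·m_{c−1} and whose (2,c) entry is m_c, for c = 1,…,d (so the rows are (m_0, 2m_1, 3m_2, …, d·m_{d−1}) and (m_1, m_2, …, m_d)). Then the ideal I_2(E) generated by the 2×2 minors of E is prime, and it equals the vanishing ideal of the affine cone C_exp = { t·(0!, 1!·λ, 2!·λ², …, d!·λ^d) ∈ ℂ^{d+1} : t, λ ∈ ℂ } over the exponential moment parameterization; that is, a polynomial f ∈ ℂ[m_0,…,m_d] vanishes at every point of C_exp if and only if f ∈ I_2(E). In particular, the exponential moment variety M_d^exp ⊆ ℙ^d is a rational normal curve. -/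

import Mathlib

/-!
Write `yᵢ = mᵢ / i!`. Up to the unit `(a+1)! (b+1)!`, the minor of `E` on columns `a < b` is the
Hankel minor `y_a y_{b+1} - y_{a+1} y_b` of the rational normal curve, so modulo `I₂(E)` the
product of the `y`'s over a multiset of indices only depends on its size and its sum: two such
multisets are connected by moves `(i, j) ↦ (k, l)` with `i + j = k + l`. The parameterization
sends `m^α` to a nonzero multiple of `t^{deg α} λ^{wt α}`, so the quotient map by `I₂(E)` factors
through it. Hence `I₂(E)` is the kernel of a map into the domain `ℂ[t, λ]`, and over the infinite
field `ℂ` lying in that kernel is the same as vanishing on the cone.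
-/

open MvPolynomial

/-- The `2 × d` matrix `E` of the exponential moment variety, in `ℂ[m₀,…,m_d]`: its `c`-th
column, for `1 ≤ c ≤ d`, is `(c·m_{c-1}, m_c)ᵀ`. -/
noncomputable def expMatrix (d : ℕ) :
    Matrix (Fin 2) (Fin d) (MvPolynomial (Fin (d + 1)) ℂ) :=
  Matrix.of fun r c =>
    ![C ((c.val : ℂ) + 1) * X ⟨c.val, by have := c.isLt; omega⟩,
      X ⟨c.val + 1, by have := c.isLt; omega⟩] r

/-- The ideal `I₂(E)` generated by all `2 × 2` minors of `E`. -/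
noncomputable def expIdeal (d : ℕ) : Ideal (MvPolynomial (Fin (d + 1)) ℂ) :=
  Ideal.span
    { p | ∃ s : Fin 2 → Fin d, StrictMono s ∧ p = ((expMatrix d).submatrix id s).det }

open scoped Nat

/-- The `2 × 2` minors of the Hankel matrix with rows `(x₀, …, x_{d-1})` and `(x₁, …, x_d)`
vanish. -/
def HankelMinorsVanish {M : Type*} [CommMonoid M] (x : ℕ → M) (d : ℕ) : Prop :=
  ∀ a b, a < b → b < d → x a * x (b + 1) = x (a + 1) * x b

namespace HankelMinorsVanish

open Multiset

variable {M : Type*} [CommMonoid M] {x : ℕ → M} {d : ℕ}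

theorem mul_eq_mul_of_add_eq (hx : HankelMinorsVanish x d) {i j k l : ℕ} (hk : i ≤ k)
    (hl : i ≤ l) (hj : j ≤ d) (h : i + j = k + l) : x i * x j = x k * x l := by
  rcases hk.eq_or_lt with rfl | hk
  · rw [show j = l by omega]
  rcases hl.eq_or_lt with rfl | hl
  · rw [show j = k by omega, mul_comm]
  obtain ⟨j, rfl⟩ : ∃ j', j = j' + 1 := ⟨j - 1, by omega⟩
  rw [hx i j (by omega) (by omega)]
  exact mul_eq_mul_of_add_eq hx (by omega) (by omega) (by omega) (by omega)
termination_by j - i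

theorem exists_cons_prod_eq (hx : HankelMinorsVanish x d) {s : Multiset ℕ}
    (hs : ∀ i ∈ s, i ≤ d) {a b c : ℕ} (ha : a ∈ s) (hc : c ∈ s) (hab : a ≤ b) (hbc : b ≤ c) :
    ∃ s', card (b ::ₘ s') = card s ∧ (b ::ₘ s').sum = s.sum ∧ (∀ i ∈ s', i ≤ d) ∧
      ((b ::ₘ s').map x).prod = (s.map x).prod := by
  by_cases hb : b ∈ s
  · exact ⟨s.erase b, by rw [cons_erase hb], by rw [cons_erase hb],
      fun i hi => hs i (mem_of_mem_erase hi), by rw [cons_erase hb]⟩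
  have hab : a < b := lt_of_le_of_ne hab (by rintro rfl; exact hb ha)
  have hbc : b < c := lt_of_le_of_ne hbc (by rintro rfl; exact hb hc)
  have hc' : c ∈ s.erase a := (mem_erase_of_ne (by omega)).2 hc
  set r := (s.erase a).erase c
  have hsr : s = a ::ₘ c ::ₘ r := by rw [cons_erase hc', cons_erase ha]
  refine ⟨(a + c - b) ::ₘ r, ?_, ?_, ?_, ?_⟩
  · simp [hsr]
  · simp only [hsr, sum_cons]
    omega
  · intro i hi
    rcases mem_cons.1 hi with rfl | hi
    · have := hs c hc
      omega
    · exact hs i (mem_of_mem_erase (mem_of_mem_erase hi))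
  · simp only [hsr, map_cons, prod_cons, ← mul_assoc]
    rw [hx.mul_eq_mul_of_add_eq (k := b) (l := a + c - b) hab.le (by omega) (hs c hc) (by omega)]

theorem prod_map_eq_of_card_eq_of_sum_eq (hx : HankelMinorsVanish x d) {s t : Multiset ℕ}
    (hs : ∀ i ∈ s, i ≤ d) (ht : ∀ i ∈ t, i ≤ d) (hcard : card s = card t)
    (hsum : s.sum = t.sum) : (s.map x).prod = (t.map x).prod := by
  obtain ⟨n, hn⟩ : ∃ n, card s = n := ⟨_, rfl⟩
  induction n generalizing s t with
  | zero => rw [card_eq_zero.1 hn, card_eq_zero.1 (hcard.symm.trans hn)]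
  | succ n ih =>
    have exists_min (u : Multiset ℕ) (hu : u ≠ 0) : ∃ a ∈ u, ∀ z ∈ u, a ≤ z := by
      obtain ⟨a, ha, hmin⟩ := u.toFinset.exists_min_image id (by simpa using hu)
      exact ⟨a, by simpa using ha, fun z hz => hmin z (by simpa using hz)⟩
    obtain ⟨a, ha, ha_min⟩ := exists_min s fun h => by simp [h] at hn
    obtain ⟨b, hb, hb_min⟩ := exists_min t fun h => by simp [h, hn] at hcard
    wlog hab : a ≤ b generalizing s t a b
    · exact (this ht hs hcard.symm hsum.symm (hcard ▸ hn) b hb hb_min a ha ha_min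
        (by omega)).symm
    -- As `s` and `t` have the same mean, `s` reaches up to `min t`; a move then puts
    -- `min t` into `s`, where it cancels.
    obtain ⟨c, hc, hbc⟩ : ∃ c ∈ s, b ≤ c := by
      by_contra! h
      have h1 : s.sum ≤ card s * (b - 1) := sum_le_card_nsmul s _ fun z hz => by
        have := h z hz
        omega
      have h2 : card t * b ≤ t.sum := card_nsmul_le_sum hb_min
      have hb0 : 1 ≤ b := by
        have := h a ha
        omega
      have h3 : card t ≤ card t * b := Nat.le_mul_of_pos_right _ hb0
      rw [Nat.mul_sub_one, hcard] at h1
      omega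
    obtain ⟨s', hcard', hsum', hs', hprod⟩ := hx.exists_cons_prod_eq hs ha hc hab hbc
    have ht' : t = b ::ₘ t.erase b := (cons_erase hb).symm
    rw [← hprod, ht', map_cons, map_cons, prod_cons, prod_cons,
      ih hs' (fun i hi => ht i (mem_of_mem_erase hi))]
    · rw [ht', card_cons, ← hcard', card_cons] at hcard
      omega
    · rw [ht', sum_cons, ← hsum', sum_cons] at hsum
      omega
    · rw [card_cons] at hcard'
      omega

theorem prod_pow_eq_of_degree_eq_of_weight_eq (hx : HankelMinorsVanish x d)
    {α β : Fin (d + 1) →₀ ℕ} (hdeg : α.degree = β.degree)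
    (hwt : Finsupp.weight (fun i : Fin (d + 1) => (i : ℕ)) α =
      Finsupp.weight (fun i : Fin (d + 1) => (i : ℕ)) β) :
    (α.prod fun i k => x i ^ k) = β.prod fun i k => x i ^ k := by
  have hprod (γ : Fin (d + 1) →₀ ℕ) :
      (γ.prod fun i k => x i ^ k) = ((γ.toMultiset.map Fin.val).map x).prod := by
    rw [map_map, Finsupp.toMultiset_map, Finsupp.prod_toMultiset,
      Finsupp.prod_mapDomain_index (by simp) (by simp [pow_add])]
    rfl
  have hcard (γ : Fin (d + 1) →₀ ℕ) : card (γ.toMultiset.map Fin.val) = γ.degree := by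
    simp [Finsupp.degree_apply, Finsupp.sum]
  have hsum (γ : Fin (d + 1) →₀ ℕ) :
      (γ.toMultiset.map Fin.val).sum = Finsupp.weight (fun i : Fin (d + 1) => (i : ℕ)) γ := by
    rw [Finsupp.toMultiset_map, Finsupp.sum_toMultiset,
      Finsupp.sum_mapDomain_index (by simp) (fun _ _ _ => add_smul _ _ _), Finsupp.weight_apply]
  rw [hprod, hprod]
  refine hx.prod_map_eq_of_card_eq_of_sum_eq ?_ ?_ (by rw [hcard, hcard, hdeg])
    (by rw [hsum, hsum, hwt])
  all_goals simpa using fun i _ => Nat.lt_succ_iff.1 i.isLt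

end HankelMinorsVanish

theorem MvPolynomial.aeval_smul_monomial {R A σ : Type*} [CommSemiring R] [CommSemiring A]
    [Algebra R A] (c : σ → R) (g : σ → A) (α : σ →₀ ℕ) (a : R) :
    aeval (fun i => c i • g i) (monomial α a) =
      (a * α.prod fun i k => c i ^ k) • α.prod fun i k => g i ^ k := by
  simp only [aeval_monomial, Finsupp.prod, Algebra.smul_def, mul_pow, Finset.prod_mul_distrib,
    map_mul, map_prod, map_pow, mul_assoc]

namespace ExpMoment

open Finsupp (single degree weight)

variable {d : ℕ}

/-- The parameterization of the cone, with `t = X 0` and `λ = X 1`. -/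
noncomputable def expMomentMap (d : ℕ) :
    MvPolynomial (Fin (d + 1)) ℂ →ₐ[ℂ] MvPolynomial (Fin 2) ℂ :=
  aeval fun i => (i.val ! : ℂ) • (X 0 * X 1 ^ i.val)

noncomputable def paramExponent (α : Fin (d + 1) →₀ ℕ) : Fin 2 →₀ ℕ :=
  single 0 (degree α) + single 1 (weight (fun i : Fin (d + 1) => (i : ℕ)) α)

theorem prod_X_mul_X_pow {R : Type*} [CommSemiring R] (α : Fin (d + 1) →₀ ℕ) :
    (α.prod fun i k => ((X 0 * X 1 ^ i.val) ^ k : MvPolynomial (Fin 2) R)) =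
      monomial (paramExponent α) 1 := by
  simp only [Finsupp.prod, mul_pow, ← pow_mul, Finset.prod_mul_distrib,
    Finset.prod_pow_eq_pow_sum]
  rw [X_pow_eq_monomial, X_pow_eq_monomial, monomial_mul, one_mul, paramExponent,
    Finsupp.degree_apply, Finsupp.weight_apply, Finsupp.sum]
  simp [mul_comm]

theorem expMomentMap_monomial (α : Fin (d + 1) →₀ ℕ) (a : ℂ) :
    expMomentMap d (monomial α a) =
      monomial (paramExponent α) (a * α.prod fun i k => (i.val ! : ℂ) ^ k) := by
  rw [expMomentMap, aeval_smul_monomial, prod_X_mul_X_pow, smul_monomial, smul_eq_mul, mul_one]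

theorem expMomentMap_minor (s : Fin 2 → Fin d) :
    expMomentMap d ((expMatrix d).submatrix id s).det = 0 := by
  simp only [expMatrix, Matrix.det_fin_two, Matrix.submatrix_apply, id_eq, Matrix.of_apply,
    Matrix.cons_val_zero, Matrix.cons_val_one, Matrix.cons_val_fin_one, map_sub, map_mul,
    map_natCast, map_add, map_one, expMomentMap, aeval_X, smul_eq_C_mul,
    Nat.factorial_succ, Nat.cast_mul, Nat.cast_add, Nat.cast_one]
  ring

/-- The class of `mₙ / n!` modulo `I₂(E)`; `Fin.ofNat` wraps around, but only `n ≤ d` is used. -/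
noncomputable def normalizedMoment (d n : ℕ) : MvPolynomial (Fin (d + 1)) ℂ ⧸ expIdeal d :=
  algebraMap ℂ _ (n ! : ℂ)⁻¹ * Ideal.Quotient.mk _ (X (Fin.ofNat (d + 1) n))

theorem mk_X (i : Fin (d + 1)) :
    Ideal.Quotient.mk (expIdeal d) (X i) =
      algebraMap ℂ _ (i.val ! : ℂ) * normalizedMoment d i := by
  rw [normalizedMoment, Fin.ofNat_val_eq_self, ← mul_assoc, ← map_mul,
    mul_inv_cancel₀ (by exact_mod_cast i.val.factorial_ne_zero), map_one, one_mul]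

theorem hankelMinorsVanish_normalizedMoment : HankelMinorsVanish (normalizedMoment d) d := by
  intro a b hab hbd
  have hmem : ((expMatrix d).submatrix id ![⟨a, by omega⟩, ⟨b, hbd⟩]).det ∈ expIdeal d :=
    Ideal.subset_span ⟨_, Fin.strictMono_iff_lt_succ.2 (by simpa [Fin.forall_fin_one]), rfl⟩
  have hminor := Ideal.Quotient.eq_zero_iff_mem.2 hmem
  simp only [expMatrix, Matrix.det_fin_two, Matrix.submatrix_apply, id_eq, Matrix.of_apply,
    Matrix.cons_val_zero, Matrix.cons_val_one, Matrix.cons_val_fin_one, map_sub, map_mul,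
    map_natCast, map_add, map_one, mk_X] at hminor
  push_cast [Nat.factorial_succ] at hminor
  have key : (((a + 1)! * (b + 1)! : ℕ) : MvPolynomial (Fin (d + 1)) ℂ ⧸ expIdeal d) *
      (normalizedMoment d a * normalizedMoment d (b + 1) -
        normalizedMoment d (a + 1) * normalizedMoment d b) = 0 := by
    push_cast [Nat.factorial_succ]
    linear_combination hminor
  have hunit :
      IsUnit (((a + 1)! * (b + 1)! : ℕ) : MvPolynomial (Fin (d + 1)) ℂ ⧸ expIdeal d) := by
    rw [← map_natCast (algebraMap ℂ _)]
    exact (isUnit_iff_ne_zero.2 (Nat.cast_ne_zero.2 (by positivity))).map _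
  rwa [hunit.mul_right_eq_zero, sub_eq_zero] at key

theorem mk_monomial (α : Fin (d + 1) →₀ ℕ) (a : ℂ) :
    Ideal.Quotient.mk (expIdeal d) (monomial α a) =
      (a * α.prod fun (i : Fin (d + 1)) k => (i.val ! : ℂ) ^ k) •
        α.prod fun (i : Fin (d + 1)) k => normalizedMoment d i ^ k := by
  have hmk : Ideal.Quotient.mkₐ ℂ (expIdeal d) =
      aeval fun i : Fin (d + 1) => (i.val ! : ℂ) • normalizedMoment d i := by
    ext i
    simp [mk_X, Nat.cast_smul_eq_nsmul]
  rw [← Ideal.Quotient.mkₐ_eq_mk ℂ, hmk, aeval_smul_monomial]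

/-- Sends `t^n λ^w` to the product of the `normalizedMoment`s over some monomial with degree `n`
and weight `w` (junk if there is none). -/
noncomputable def monomialClass (d : ℕ) :
    MvPolynomial (Fin 2) ℂ →ₗ[ℂ] MvPolynomial (Fin (d + 1)) ℂ ⧸ expIdeal d :=
  (basisMonomials (Fin 2) ℂ).constr ℂ fun M =>
    (Function.invFun paramExponent M).prod fun (i : Fin (d + 1)) k => normalizedMoment d i ^ k

theorem monomialClass_monomial (M : Fin 2 →₀ ℕ) (c : ℂ) :
    monomialClass d (monomial M c) =
      c • (Function.invFun paramExponent M).prod fun (i : Fin (d + 1)) k =>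
        normalizedMoment d i ^ k := by
  rw [show monomial M c = c • monomial M 1 by rw [smul_monomial, smul_eq_mul, mul_one],
    map_smul]
  exact congrArg (c • ·) ((basisMonomials (Fin 2) ℂ).constr_basis ℂ _ M)

theorem mk_eq_monomialClass_expMomentMap (f : MvPolynomial (Fin (d + 1)) ℂ) :
    Ideal.Quotient.mk (expIdeal d) f = monomialClass d (expMomentMap d f) := by
  induction f using MvPolynomial.induction_on' with
  | add p q hp hq => rw [map_add, map_add, map_add, hp, hq]
  | monomial α a =>
    rw [mk_monomial, expMomentMap_monomial, monomialClass_monomial]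
    have hrep := Function.invFun_eq (⟨α, rfl⟩ : ∃ β, paramExponent β = paramExponent α)
    congr 1
    refine (hankelMinorsVanish_normalizedMoment.prod_pow_eq_of_degree_eq_of_weight_eq ?_ ?_).symm
    · simpa [paramExponent] using congrArg (· 0) hrep
    · simpa [paramExponent] using congrArg (· 1) hrep

theorem expIdeal_eq_ker : expIdeal d = RingHom.ker (expMomentMap d) := by
  refine le_antisymm (Ideal.span_le.2 ?_) fun f hf => ?_
  · rintro _ ⟨s, -, rfl⟩
    exact expMomentMap_minor s
  · rw [← Ideal.Quotient.eq_zero_iff_mem, mk_eq_monomialClass_expMomentMap,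
      RingHom.mem_ker.1 hf, map_zero]

theorem eval_expMomentMap (f : MvPolynomial (Fin (d + 1)) ℂ) (t lam : ℂ) :
    eval ![t, lam] (expMomentMap d f) =
      eval (fun i : Fin (d + 1) => t * (i.val ! : ℂ) * lam ^ i.val) f := by
  change aeval ![t, lam] (aeval _ f) = aeval _ f
  rw [← AlgHom.comp_apply, comp_aeval]
  congr 2
  funext i
  simp only [map_smul, map_mul, map_pow, aeval_X, Matrix.cons_val_zero, Matrix.cons_val_one,
    Matrix.cons_val_fin_one, smul_eq_mul]
  ring

end ExpMoment

theorem exp_momentVariety_general (d : ℕ) :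
    (expIdeal d).IsPrime ∧
      ∀ f : MvPolynomial (Fin (d + 1)) ℂ,
        (∀ t lam : ℂ,
            eval (fun i : Fin (d + 1) => t * (i.val.factorial : ℂ) * lam ^ i.val) f = 0) ↔
          f ∈ expIdeal d := by
  rw [ExpMoment.expIdeal_eq_ker]
  refine ⟨RingHom.ker_isPrime _, fun f => ?_⟩
  simp only [← ExpMoment.eval_expMomentMap, RingHom.mem_ker]
  refine ⟨fun h => MvPolynomial.funext fun x => ?_, fun h t lam => by rw [h, map_zero]⟩
  rw [map_zero, show x = ![x 0, x 1] from List.ofFn_inj.mp rfl]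
  exact h (x 0) (x 1)

/-- `I₂(E)` is prime and equals the vanishing ideal of the affine cone
`{ t·(0!, 1!·λ, 2!·λ², …, d!·λ^d) : t, λ ∈ ℂ }` over the exponential moment
parameterization; in particular the exponential moment variety is a rational normal
curve. -/
theorem exp_momentVariety (d : ℕ) (hd : 2 ≤ d) :
    (expIdeal d).IsPrime ∧
      ∀ f : MvPolynomial (Fin (d + 1)) ℂ,
        (∀ t lam : ℂ,
            eval (fun i : Fin (d + 1) => t * (i.val.factorial : ℂ) * lam ^ i.val) f = 0) ↔
          f ∈ expIdeal d :=
  exp_momentVariety_general d
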